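/- (Mean-zero property of the conditional-likelihood score, giving E(S) = 0.) Under the logistic missingness model and the location-scale outcome model with M₁(γ) < ∞, set α = α₀ + log M₁(γ) and π̃(x) = 1/(1 + exp(α + β·x₁ + γ·μ(x))). Then for every bounded measurable function v : ℝ^d → ℝ one has E[(R − π̃(X))·v(X)] = 0. -/

import Mathlib

open MeasureTheory ProbabilityTheory

/-- Pull-out property used for the score computation: if `f` is `m`-measurable with `f·R`
integrable, and `g` is an a.e. version of `P[R|m]`, then `∫ f·R = ∫ f·g`. -/
lemma pull_aux {Ω : Type*} {mΩ : MeasurableSpace Ω} (P : Measure Ω) [IsProbabilityMeasure P]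
    {m : MeasurableSpace Ω} (hm : m ≤ mΩ) (f R g : Ω → ℝ)
    (hfm : Measurable[m] f) (hfR : Integrable (fun ω => f ω * R ω) P) (hR : Integrable R P)
    (hg : g =ᵐ[P] P[R | m]) :
    ∫ ω, f ω * R ω ∂P = ∫ ω, f ω * g ω ∂P := by
  have hfR' : Integrable (f * R) P := hfR
  have h1 : P[f * R | m] =ᵐ[P] f * P[R | m] :=
    condExp_mul_of_stronglyMeasurable_left hfm.stronglyMeasurable hfR' hR
  have h2 := integral_condExp (μ := P) (f := f * R) hm
  calc ∫ ω, f ω * R ω ∂P = ∫ ω, (P[f * R | m]) ω ∂P := h2.symm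
    _ = ∫ ω, f ω * g ω ∂P := by
        refine integral_congr_ae ?_
        filter_upwards [h1, hg] with ω h1ω hgω
        rw [h1ω, Pi.mul_apply, hgω]

/-- (Mean-zero property of the conditional-likelihood score, giving `E(S) = 0`.) Under the
logistic missingness model and the location-scale outcome model with `M₁(γ) < ∞`, set
`α = α₀ + log M₁(γ)` and `π̃(x) = 1/(1 + exp(α + β·x₁ + γ·μ(x)))`. Then for every bounded
measurable `v : ℝ^d → ℝ` one has `E[(R − π̃(X))·v(X)] = 0`. -/
theorem conditional_likelihood_score_mean_zero
    {Ω : Type*} [MeasurableSpace Ω] (P : Measure Ω) [IsProbabilityMeasure P]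
    {d d₁ : ℕ}
    (X : Ω → (Fin d → ℝ)) (Y : Ω → ℝ) (R : Ω → ℝ)
    (hX : Measurable X) (hY : Measurable Y) (hR : Measurable R)
    (hR01 : ∀ ω, R ω = 0 ∨ R ω = 1)
    (proj : (Fin d → ℝ) →ₗ[ℝ] (Fin d₁ → ℝ))
    (α₀ : ℝ) (β : Fin d₁ → ℝ) (γ : ℝ)
    (hmodel : (fun ω => (1 + Real.exp (α₀ + ∑ i, β i * proj (X ω) i + γ * Y ω))⁻¹)
      =ᵐ[P] P[R | MeasurableSpace.comap (fun ω => (X ω, Y ω)) inferInstance])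
    (η : ℝ) (hη : η = (P {ω | R ω = 1}).toReal) (hη0 : 0 < η) (hη1 : η < 1)
    -- location-scale outcome model
    (μreg : (Fin d → ℝ) → ℝ) (hμ : Measurable μreg)
    (hindep : IndepFun (fun ω => Y ω - μreg (X ω)) X (P[|{ω | R ω = 1}]))
    (hεint : Integrable (fun ω => Y ω - μreg (X ω)) (P[|{ω | R ω = 1}]))
    (hεmean : ∫ ω, (Y ω - μreg (X ω)) ∂(P[|{ω | R ω = 1}]) = 0)
    -- M₁(γ) < ∞
    (hM1 : Integrable (fun ω => Real.exp (γ * (Y ω - μreg (X ω)))) (P[|{ω | R ω = 1}]))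
    (M₁γ : ℝ)
    (hM₁γ : M₁γ = ∫ ω, Real.exp (γ * (Y ω - μreg (X ω))) ∂(P[|{ω | R ω = 1}])) :
    ∀ v : (Fin d → ℝ) → ℝ, Measurable v → (∃ C, ∀ x, |v x| ≤ C) →
      ∫ ω, (R ω - (1 + Real.exp ((α₀ + Real.log M₁γ) + ∑ i, β i * proj (X ω) i
          + γ * μreg (X ω)))⁻¹) * v (X ω) ∂P = 0 := by
  rintro v hv ⟨C, hC⟩
  -- Basic setup
  set S : Set Ω := {ω | R ω = 1} with hSdef
  have hS : MeasurableSet S := hR (measurableSet_singleton 1)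
  have hPS : (P S).toReal = η := hη.symm
  have hPS0 : P S ≠ 0 := by
    intro h
    rw [hη, h] at hη0; simp at hη0
  have hPSfin : P S ≠ ⊤ := measure_ne_top P S
  haveI hP1 : IsProbabilityMeasure (P[|S]) := cond_isProbabilityMeasure hPS0
  have hηne : η ≠ 0 := ne_of_gt hη0
  have hM₁pos : 0 < M₁γ := by
    rw [hM₁γ]; exact integral_exp_pos hM1
  -- abbreviations
  set s : (Fin d → ℝ) → ℝ := fun x => (α₀ + Real.log M₁γ) + ∑ i, β i * proj x i + γ * μreg x
    with hsdef
  set πt : (Fin d → ℝ) → ℝ := fun x => (1 + Real.exp (s x))⁻¹ with hπtdef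
  set t : Ω → ℝ := fun ω => α₀ + ∑ i, β i * proj (X ω) i + γ * Y ω with htdef
  set ε : Ω → ℝ := fun ω => Y ω - μreg (X ω) with hεdef
  -- measurability
  have hprojm : Measurable fun x : Fin d → ℝ => (proj x : Fin d₁ → ℝ) :=
    proj.continuous_of_finiteDimensional.measurable
  have hB : Measurable fun x : Fin d → ℝ => ∑ i, β i * proj x i :=
    Finset.measurable_sum _ fun i _ => measurable_const.mul ((measurable_pi_apply i).comp hprojm)
  have hsm : Measurable s := (measurable_const.add hB).add (hμ.const_mul γ)
  have hπtm : Measurable πt := (measurable_const.add hsm.exp).inv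
  have htm : Measurable t := (measurable_const.add (hB.comp hX)).add (hY.const_mul γ)
  have hεm : Measurable ε := hY.sub (hμ.comp hX)
  -- positivity and bounds
  have hspos : ∀ x, (0:ℝ) < 1 + Real.exp (s x) := fun x => by positivity
  have htpos : ∀ ω, (0:ℝ) < 1 + Real.exp (t ω) := fun ω => by positivity
  have hπt_le : ∀ x, |πt x| ≤ 1 := by
    intro x
    rw [hπtdef]
    rw [abs_of_nonneg (le_of_lt (inv_pos.mpr (hspos x))), inv_eq_one_div,
      div_le_one (hspos x)]
    linarith [Real.exp_pos (s x)]
  have hπXY_le : ∀ ω, |(1 + Real.exp (t ω))⁻¹| ≤ 1 := by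
    intro ω
    rw [abs_of_nonneg (le_of_lt (inv_pos.mpr (htpos ω))), inv_eq_one_div,
      div_le_one (htpos ω)]
    linarith [Real.exp_pos (t ω)]
  have hesπ : ∀ x, |Real.exp (s x) * πt x| ≤ 1 := by
    intro x
    rw [hπtdef]
    rw [abs_of_nonneg (by positivity), ← div_eq_mul_inv, div_le_one (hspos x)]
    linarith
  have hetπ : ∀ ω, |Real.exp (t ω) * (1 + Real.exp (t ω))⁻¹| ≤ 1 := by
    intro ω
    rw [abs_of_nonneg (by positivity), ← div_eq_mul_inv, div_le_one (htpos ω)]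
    linarith
  have hC0 : 0 ≤ C := le_trans (abs_nonneg _) (hC 0)
  have hR_le : ∀ ω, |R ω| ≤ 1 := by
    intro ω; rcases hR01 ω with h0 | h0 <;> simp [h0]
  -- R * h = indicator of S
  have hRind : ∀ h : Ω → ℝ, (fun ω => h ω * R ω) = S.indicator h := by
    intro h
    funext ω
    rcases hR01 ω with h0 | h0
    · have hω : ω ∉ S := by simp [hSdef, h0]
      simp [Set.indicator_apply, hω, h0]
    · have hω : ω ∈ S := by simp [hSdef, h0]
      simp [Set.indicator_apply, hω, h0]
  -- ∫ h·R dP = η ∫ h dP₁  (unconditionally)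
  have hRcond : ∀ h : Ω → ℝ, ∫ ω, h ω * R ω ∂P = η * ∫ ω, h ω ∂(P[|S]) := by
    intro h
    have h2 : ∫ ω, h ω ∂(P[|S]) = (P S).toReal⁻¹ * ∫ ω in S, h ω ∂P := by
      rw [ProbabilityTheory.cond, integral_smul_measure, ENNReal.toReal_inv, smul_eq_mul]
    rw [hRind h, integral_indicator hS, h2, hPS]
    field_simp
  -- integrability transfer from the conditional measure
  have hcond_int : ∀ h : Ω → ℝ, Integrable h (P[|S]) → Integrable (fun ω => h ω * R ω) P := by
    intro h hh
    rw [ProbabilityTheory.cond,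
      integrable_smul_measure (by simpa using hPSfin) (by simpa using hPS0)] at hh
    rw [hRind h]
    rwa [integrable_indicator_iff hS]
  -- bounded measurable functions are integrable
  have hbint : ∀ (g : Ω → ℝ) (c : ℝ), Measurable g → (∀ ω, |g ω| ≤ c) → Integrable g P := by
    intro g c hg hb
    exact (integrable_const c).mono' hg.aestronglyMeasurable (Filter.Eventually.of_forall hb)
  have hRint : Integrable R P := hbint R 1 hR hR_le
  -- measurability w.r.t. the comap σ-algebra
  have hXYm : Measurable[MeasurableSpace.comap (fun ω => (X ω, Y ω)) inferInstance]
      (fun ω => (X ω, Y ω)) := Measurable.of_comap_le le_rfl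
  have hXm : Measurable[MeasurableSpace.comap (fun ω => (X ω, Y ω)) inferInstance] X :=
    measurable_fst.comp hXYm
  have hYm : Measurable[MeasurableSpace.comap (fun ω => (X ω, Y ω)) inferInstance] Y :=
    measurable_snd.comp hXYm
  have hmle : MeasurableSpace.comap (fun ω => (X ω, Y ω)) inferInstance ≤ _ :=
    (hX.prodMk hY).comap_le
  -- the relevant functions of X (and Y)
  set f₁ : Ω → ℝ := fun ω => πt (X ω) * v (X ω) with hf₁def
  set g₂ : Ω → ℝ := fun ω => Real.exp (s (X ω)) * (πt (X ω) * v (X ω)) with hg₂def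
  set f₂ : Ω → ℝ := fun ω => Real.exp (t ω) * (πt (X ω) * v (X ω)) with hf₂def
  have htmm : Measurable[MeasurableSpace.comap (fun ω => (X ω, Y ω)) inferInstance] t :=
    (measurable_const.add (hB.comp hXm)).add (hYm.const_mul γ)
  have hf₁m : Measurable[MeasurableSpace.comap (fun ω => (X ω, Y ω)) inferInstance] f₁ :=
    (hπtm.comp hXm).mul (hv.comp hXm)
  have hf₂m : Measurable[MeasurableSpace.comap (fun ω => (X ω, Y ω)) inferInstance] f₂ :=
    htmm.exp.mul ((hπtm.comp hXm).mul (hv.comp hXm))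
  have hf₁meas : Measurable f₁ := (hπtm.comp hX).mul (hv.comp hX)
  have hg₂meas : Measurable g₂ := ((hsm.comp hX).exp).mul ((hπtm.comp hX).mul (hv.comp hX))
  have hf₂meas : Measurable f₂ := htm.exp.mul ((hπtm.comp hX).mul (hv.comp hX))
  have hf₁b : ∀ ω, |f₁ ω| ≤ C := by
    intro ω
    calc |f₁ ω| = |πt (X ω)| * |v (X ω)| := abs_mul _ _
      _ ≤ 1 * C := mul_le_mul (hπt_le _) (hC _) (abs_nonneg _) zero_le_one
      _ = C := one_mul C
  have hg₂b : ∀ ω, |g₂ ω| ≤ C := by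
    intro ω
    have h1 : g₂ ω = (Real.exp (s (X ω)) * πt (X ω)) * v (X ω) := by rw [hg₂def]; ring
    rw [h1, abs_mul]
    calc |Real.exp (s (X ω)) * πt (X ω)| * |v (X ω)| ≤ 1 * C :=
        mul_le_mul (hesπ _) (hC _) (abs_nonneg _) zero_le_one
      _ = C := one_mul C
  -- key exponential identity
  have hts : ∀ ω, Real.exp (t ω) = M₁γ⁻¹ * (Real.exp (γ * ε ω) * Real.exp (s (X ω))) := by
    intro ω
    have h1 : t ω = s (X ω) - Real.log M₁γ + γ * ε ω := by
      simp only [htdef, hsdef, hεdef]; ring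
    rw [h1, Real.exp_add, Real.exp_sub, Real.exp_log hM₁pos]
    ring
  -- integrability of f₂ with respect to the conditional measure
  have hf₂P₁ : Integrable f₂ (P[|S]) := by
    refine (hM1.const_mul (M₁γ⁻¹ * C)).mono'
      (hf₂meas.aestronglyMeasurable : AEStronglyMeasurable f₂ (P[|S]))
      (Filter.Eventually.of_forall fun ω => ?_)
    have h1 : f₂ ω = M₁γ⁻¹ * Real.exp (γ * ε ω) * ((Real.exp (s (X ω)) * πt (X ω)) * v (X ω)) := by
      rw [hf₂def]
      show Real.exp (t ω) * (πt (X ω) * v (X ω)) = _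
      rw [hts ω]; ring
    rw [Real.norm_eq_abs, h1, abs_mul]
    have h2 : |M₁γ⁻¹ * Real.exp (γ * ε ω)| = M₁γ⁻¹ * Real.exp (γ * ε ω) :=
      abs_of_nonneg (by positivity)
    rw [h2]
    have h3 : |(Real.exp (s (X ω)) * πt (X ω)) * v (X ω)| ≤ C := by
      rw [abs_mul]
      calc |Real.exp (s (X ω)) * πt (X ω)| * |v (X ω)| ≤ 1 * C :=
          mul_le_mul (hesπ _) (hC _) (abs_nonneg _) zero_le_one
        _ = C := one_mul C
    calc M₁γ⁻¹ * Real.exp (γ * ε ω) * |(Real.exp (s (X ω)) * πt (X ω)) * v (X ω)|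
        ≤ M₁γ⁻¹ * Real.exp (γ * ε ω) * C := mul_le_mul_of_nonneg_left h3 (by positivity)
      _ = M₁γ⁻¹ * C * Real.exp (γ * (Y ω - μreg (X ω))) := by rw [hεdef]; ring
  have hf₂R : Integrable (fun ω => f₂ ω * R ω) P := hcond_int f₂ hf₂P₁
  have hf₁R : Integrable (fun ω => f₁ ω * R ω) P := by
    refine hbint _ C (hf₁meas.mul hR) fun ω => ?_
    rw [abs_mul]
    calc |f₁ ω| * |R ω| ≤ C * 1 := mul_le_mul (hf₁b ω) (hR_le ω) (abs_nonneg _) hC0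
      _ = C := mul_one C
  have hg₂R : Integrable (fun ω => g₂ ω * R ω) P := by
    refine hbint _ C (hg₂meas.mul hR) fun ω => ?_
    rw [abs_mul]
    calc |g₂ ω| * |R ω| ≤ C * 1 := mul_le_mul (hg₂b ω) (hR_le ω) (abs_nonneg _) hC0
      _ = C := mul_one C
  -- Step (independence): ∫ g₂ dP₁ = ∫ f₂ dP₁
  have hindep2 : IndepFun (fun ω => Real.exp (γ * ε ω)) g₂ (P[|S]) := by
    have h := hindep.comp (φ := fun r : ℝ => Real.exp (γ * r))
      (ψ := fun x => Real.exp (s x) * (πt x * v x))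
      ((measurable_const_mul γ).exp) (hsm.exp.mul (hπtm.mul hv))
    exact h
  have hφmeas : Measurable (fun ω => Real.exp (γ * ε ω)) := (hεm.const_mul γ).exp
  have hg₂f₂ : ∫ ω, g₂ ω ∂(P[|S]) = ∫ ω, f₂ ω ∂(P[|S]) := by
    have hmul : ∫ ω, Real.exp (γ * ε ω) * g₂ ω ∂(P[|S])
        = (∫ ω, Real.exp (γ * ε ω) ∂(P[|S])) * ∫ ω, g₂ ω ∂(P[|S]) :=
      hindep2.integral_mul_eq_mul_integral hφmeas.aestronglyMeasurable hg₂meas.aestronglyMeasurable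
    have hM : ∫ ω, Real.exp (γ * ε ω) ∂(P[|S]) = M₁γ := by rw [hM₁γ]
    have hf₂eq : ∫ ω, f₂ ω ∂(P[|S]) = M₁γ⁻¹ * ∫ ω, Real.exp (γ * ε ω) * g₂ ω ∂(P[|S]) := by
      rw [← integral_const_mul]
      refine integral_congr_ae (Filter.Eventually.of_forall fun ω => ?_)
      show f₂ ω = M₁γ⁻¹ * (Real.exp (γ * ε ω) * g₂ ω)
      rw [hf₂def, hg₂def]
      show Real.exp (t ω) * (πt (X ω) * v (X ω)) = _
      rw [hts ω]; ring
    rw [hf₂eq, hmul, hM, ← mul_assoc, inv_mul_cancel₀ (ne_of_gt hM₁pos), one_mul]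
  have E2a : ∫ ω, g₂ ω * R ω ∂P = ∫ ω, f₂ ω * R ω ∂P := by
    rw [hRcond, hRcond, hg₂f₂]
  -- pull-out on both pieces
  have hmodel' : (fun ω => (1 + Real.exp (t ω))⁻¹)
      =ᵐ[P] P[R | MeasurableSpace.comap (fun ω => (X ω, Y ω)) inferInstance] := hmodel
  have E1 : ∫ ω, f₁ ω * R ω ∂P = ∫ ω, f₁ ω * (1 + Real.exp (t ω))⁻¹ ∂P :=
    pull_aux P hmle f₁ R _ hf₁m hf₁R hRint hmodel'
  have E2b : ∫ ω, f₂ ω * R ω ∂P = ∫ ω, f₂ ω * (1 + Real.exp (t ω))⁻¹ ∂P :=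
    pull_aux P hmle f₂ R _ hf₂m hf₂R hRint hmodel'
  -- integrability for recombination
  have hf₁π : Integrable (fun ω => f₁ ω * (1 + Real.exp (t ω))⁻¹) P := by
    refine hbint _ C (hf₁meas.mul (measurable_const.add htm.exp).inv) fun ω => ?_
    rw [abs_mul]
    calc |f₁ ω| * |(1 + Real.exp (t ω))⁻¹| ≤ C * 1 :=
        mul_le_mul (hf₁b ω) (hπXY_le ω) (abs_nonneg _) hC0
      _ = C := mul_one C
  have hf₂π : Integrable (fun ω => f₂ ω * (1 + Real.exp (t ω))⁻¹) P := by
    refine hbint _ C (hf₂meas.mul (measurable_const.add htm.exp).inv) fun ω => ?_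
    have h1 : f₂ ω * (1 + Real.exp (t ω))⁻¹
        = (Real.exp (t ω) * (1 + Real.exp (t ω))⁻¹) * (πt (X ω) * v (X ω)) := by
      rw [hf₂def]; ring
    rw [h1, abs_mul]
    calc |Real.exp (t ω) * (1 + Real.exp (t ω))⁻¹| * |πt (X ω) * v (X ω)| ≤ 1 * C :=
        mul_le_mul (hetπ ω) (hf₁b ω) (abs_nonneg _) zero_le_one
      _ = C := one_mul C
  -- the relevant integrable functions against R
  have hvR : Integrable (fun ω => v (X ω) * R ω) P := by
    refine hbint _ C ((hv.comp hX).mul hR) fun ω => ?_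
    rw [abs_mul]
    calc |v (X ω)| * |R ω| ≤ C * 1 := mul_le_mul (hC _) (hR_le ω) (abs_nonneg _) hC0
      _ = C := mul_one C
  have hf₁P : Integrable f₁ P := hbint _ C hf₁meas hf₁b
  -- main chain
  have key : ∫ ω, v (X ω) * R ω ∂P = ∫ ω, f₁ ω ∂P := by
    have step1 : ∫ ω, v (X ω) * R ω ∂P = ∫ ω, (f₁ ω * R ω + g₂ ω * R ω) ∂P := by
      refine integral_congr_ae (Filter.Eventually.of_forall fun ω => ?_)
      have hne := ne_of_gt (hspos (X ω))
      simp only [hf₁def, hg₂def, hπtdef]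
      field_simp
    have step4 : ∫ ω, (f₁ ω * (1 + Real.exp (t ω))⁻¹ + f₂ ω * (1 + Real.exp (t ω))⁻¹) ∂P
        = ∫ ω, f₁ ω ∂P := by
      refine integral_congr_ae (Filter.Eventually.of_forall fun ω => ?_)
      have hne := ne_of_gt (htpos ω)
      simp only [hf₂def, hf₁def]
      field_simp
    calc ∫ ω, v (X ω) * R ω ∂P
        = ∫ ω, (f₁ ω * R ω + g₂ ω * R ω) ∂P := step1
      _ = (∫ ω, f₁ ω * R ω ∂P) + ∫ ω, g₂ ω * R ω ∂P := integral_add hf₁R hg₂R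
      _ = (∫ ω, f₁ ω * (1 + Real.exp (t ω))⁻¹ ∂P)
          + ∫ ω, f₂ ω * (1 + Real.exp (t ω))⁻¹ ∂P := by rw [E2a, E1, E2b]
      _ = ∫ ω, (f₁ ω * (1 + Real.exp (t ω))⁻¹ + f₂ ω * (1 + Real.exp (t ω))⁻¹) ∂P :=
          (integral_add hf₁π hf₂π).symm
      _ = ∫ ω, f₁ ω ∂P := step4
  -- conclude
  have hsplit : ∫ ω, (R ω - πt (X ω)) * v (X ω) ∂P
      = ∫ ω, v (X ω) * R ω ∂P - ∫ ω, f₁ ω ∂P := by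
    rw [← integral_sub hvR hf₁P]
    refine integral_congr_ae (Filter.Eventually.of_forall fun ω => ?_)
    rw [hf₁def]
    ring
  show ∫ ω, (R ω - πt (X ω)) * v (X ω) ∂P = 0
  rw [hsplit, key, sub_self]
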